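/- arXiv:2307.10740 — 4 statements merged into one kernel-verified Lean document; each statement's English description precedes it below -/
import Mathlib

section
/- Let x₁, x₂, x₃ be pairwise distinct real numbers and y₁, y₂, y₃ be pairwise distinct real numbers. Let a, b, c, d be real numbers with ad − bc ≠ 0, let φ(t) = (a t + b)/(c t + d), and assume c yᵢ + d ≠ 0 and φ(yᵢ) = xᵢ for i = 1, 2, 3. Then the derivative of φ at y₁ equals φ′(y₁) = (x₁ − x₂)(x₁ − x₃)(y₂ − y₃) / ( (x₂ − x₃)(y₁ − y₂)(y₁ − y₃) ), and the analogous formulas hold at y₂ and y₃ with the indices cyclically permuted. -/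
/-!
Every difference of values of `φ(t) = (a t + b)/(c t + d)` factors as
`φ(u) - φ(v) = (ad - bc)(u - v) / ((c u + d)(c v + d))`. Substituting this into the three-point
expression, the factors `(yᵢ - yⱼ)` and `(c y₂ + d)(c y₃ + d)` cancel and one power of `ad - bc`
survives, leaving exactly `φ′(y₁) = (ad - bc)/(c y₁ + d)²`. When `ad - bc = 0` both sides are `0`,
since `x / 0 = 0`.
-/

lemma mobius_sub_mobius {K : Type*} [Field K] (a b c d u v : K)
    (hu : c * u + d ≠ 0) (hv : c * v + d ≠ 0) :
    (a * u + b) / (c * u + d) - (a * v + b) / (c * v + d)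
      = (a * d - b * c) * (u - v) / ((c * u + d) * (c * v + d)) := by
  rw [div_sub_div _ _ hu hv]
  ring

lemma hasDerivAt_mobius {𝕜 : Type*} [NontriviallyNormedField 𝕜] (a b c d y : 𝕜)
    (hy : c * y + d ≠ 0) :
    HasDerivAt (fun t : 𝕜 => (a * t + b) / (c * t + d)) ((a * d - b * c) / (c * y + d) ^ 2) y := by
  have hnum : HasDerivAt (fun t : 𝕜 => a * t + b) a y := by
    simpa using ((hasDerivAt_id y).const_mul a).add_const b
  have hden : HasDerivAt (fun t : 𝕜 => c * t + d) c y := by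
    simpa using ((hasDerivAt_id y).const_mul c).add_const d
  refine (hnum.div hden hy).congr_deriv ?_
  ring

lemma mobius_threePoint_eq {K : Type*} [Field K] (a b c d y₁ y₂ y₃ : K)
    (hy12 : y₁ ≠ y₂) (hy13 : y₁ ≠ y₃) (hy23 : y₂ ≠ y₃)
    (hd1 : c * y₁ + d ≠ 0) (hd2 : c * y₂ + d ≠ 0) (hd3 : c * y₃ + d ≠ 0) :
    let φ : K → K := fun t => (a * t + b) / (c * t + d)
    (φ y₁ - φ y₂) * (φ y₁ - φ y₃) * (y₂ - y₃) / ((φ y₂ - φ y₃) * (y₁ - y₂) * (y₁ - y₃))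
      = (a * d - b * c) / (c * y₁ + d) ^ 2 := by
  intro φ
  simp only [φ, mobius_sub_mobius a b c d _ _ hd1 hd2, mobius_sub_mobius a b c d _ _ hd1 hd3,
    mobius_sub_mobius a b c d _ _ hd2 hd3]
  rcases eq_or_ne (a * d - b * c) 0 with hdet | hdet
  · simp [hdet]
  · field_simp [sub_ne_zero.mpr hy12, sub_ne_zero.mpr hy13, sub_ne_zero.mpr hy23]

lemma hasDerivAt_mobius_threePoint {𝕜 : Type*} [NontriviallyNormedField 𝕜]
    (x₁ x₂ x₃ y₁ y₂ y₃ a b c d : 𝕜)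
    (hy12 : y₁ ≠ y₂) (hy13 : y₁ ≠ y₃) (hy23 : y₂ ≠ y₃)
    (hd1 : c * y₁ + d ≠ 0) (hd2 : c * y₂ + d ≠ 0) (hd3 : c * y₃ + d ≠ 0)
    (hφ1 : (a * y₁ + b) / (c * y₁ + d) = x₁)
    (hφ2 : (a * y₂ + b) / (c * y₂ + d) = x₂)
    (hφ3 : (a * y₃ + b) / (c * y₃ + d) = x₃) :
    HasDerivAt (fun t : 𝕜 => (a * t + b) / (c * t + d))
      ((x₁ - x₂) * (x₁ - x₃) * (y₂ - y₃) / ((x₂ - x₃) * (y₁ - y₂) * (y₁ - y₃))) y₁ := by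
  subst hφ1 hφ2 hφ3
  rw [mobius_threePoint_eq a b c d y₁ y₂ y₃ hy12 hy13 hy23 hd1 hd2 hd3]
  exact hasDerivAt_mobius a b c d y₁ hd1

theorem stmt_3_general (x₁ x₂ x₃ y₁ y₂ y₃ a b c d : ℝ)
    (hy12 : y₁ ≠ y₂) (hy13 : y₁ ≠ y₃) (hy23 : y₂ ≠ y₃)
    (hd1 : c * y₁ + d ≠ 0) (hd2 : c * y₂ + d ≠ 0) (hd3 : c * y₃ + d ≠ 0)
    (hφ1 : (a * y₁ + b) / (c * y₁ + d) = x₁)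
    (hφ2 : (a * y₂ + b) / (c * y₂ + d) = x₂)
    (hφ3 : (a * y₃ + b) / (c * y₃ + d) = x₃) :
    HasDerivAt (fun t : ℝ => (a * t + b) / (c * t + d))
      ((x₁ - x₂) * (x₁ - x₃) * (y₂ - y₃) / ((x₂ - x₃) * (y₁ - y₂) * (y₁ - y₃))) y₁ ∧
    HasDerivAt (fun t : ℝ => (a * t + b) / (c * t + d))
      ((x₂ - x₃) * (x₂ - x₁) * (y₃ - y₁) / ((x₃ - x₁) * (y₂ - y₃) * (y₂ - y₁))) y₂ ∧
    HasDerivAt (fun t : ℝ => (a * t + b) / (c * t + d))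
      ((x₃ - x₁) * (x₃ - x₂) * (y₁ - y₂) / ((x₁ - x₂) * (y₃ - y₁) * (y₃ - y₂))) y₃ :=
  ⟨hasDerivAt_mobius_threePoint x₁ x₂ x₃ y₁ y₂ y₃ a b c d hy12 hy13 hy23 hd1 hd2 hd3 hφ1 hφ2 hφ3,
    hasDerivAt_mobius_threePoint x₂ x₃ x₁ y₂ y₃ y₁ a b c d hy23 hy12.symm hy13.symm hd2 hd3 hd1
      hφ2 hφ3 hφ1,
    hasDerivAt_mobius_threePoint x₃ x₁ x₂ y₃ y₁ y₂ a b c d hy13.symm hy23.symm hy12 hd3 hd1 hd2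
      hφ3 hφ1 hφ2⟩

/-- Derivative of the Möbius transformation sending `y₁, y₂, y₃` to `x₁, x₂, x₃`:
`φ′(y₁) = (x₁−x₂)(x₁−x₃)(y₂−y₃)/((x₂−x₃)(y₁−y₂)(y₁−y₃))`, and cyclic analogues. -/
theorem stmt_3 (x₁ x₂ x₃ y₁ y₂ y₃ a b c d : ℝ)
    (hx12 : x₁ ≠ x₂) (hx13 : x₁ ≠ x₃) (hx23 : x₂ ≠ x₃)
    (hy12 : y₁ ≠ y₂) (hy13 : y₁ ≠ y₃) (hy23 : y₂ ≠ y₃)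
    (hdet : a * d - b * c ≠ 0)
    (hd1 : c * y₁ + d ≠ 0) (hd2 : c * y₂ + d ≠ 0) (hd3 : c * y₃ + d ≠ 0)
    (hφ1 : (a * y₁ + b) / (c * y₁ + d) = x₁)
    (hφ2 : (a * y₂ + b) / (c * y₂ + d) = x₂)
    (hφ3 : (a * y₃ + b) / (c * y₃ + d) = x₃) :
    HasDerivAt (fun t : ℝ => (a * t + b) / (c * t + d))
      ((x₁ - x₂) * (x₁ - x₃) * (y₂ - y₃) / ((x₂ - x₃) * (y₁ - y₂) * (y₁ - y₃))) y₁ ∧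
    HasDerivAt (fun t : ℝ => (a * t + b) / (c * t + d))
      ((x₂ - x₃) * (x₂ - x₁) * (y₃ - y₁) / ((x₃ - x₁) * (y₂ - y₃) * (y₂ - y₁))) y₂ ∧
    HasDerivAt (fun t : ℝ => (a * t + b) / (c * t + d))
      ((x₃ - x₁) * (x₃ - x₂) * (y₁ - y₂) / ((x₁ - x₂) * (y₃ - y₁) * (y₃ - y₂))) y₃ :=
  stmt_3_general x₁ x₂ x₃ y₁ y₂ y₃ a b c d hy12 hy13 hy23 hd1 hd2 hd3 hφ1 hφ2 hφ3
end

section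
/- Define G(u,v) = (1/(2π)) · log( |u − conj(v)| / |u − v| ) for distinct points u, v of the upper half-plane ℍ. For every η ∈ (0,1) there exist ν > 0 and C₀ > 0 such that the following holds: for all distinct z₁, z₂ ∈ ℍ, all r₁, r₂ ∈ (0, 1 − η) satisfying r₁·Im(z₁) ≤ ν·|z₁ − z₂| and r₂·Im(z₂) ≤ ν·|z₁ − z₂|, and all z₃ ∈ U(z₁, r₁) and z₄ ∈ U(z₂, r₂) with z₃ ≠ z₄, one has G(z₃, z₄) ≤ C₀ · (1 + G(z₁, z₂)). -/
/-!
If `|z - w| ≤ r |z - conj w|` with `r < 1 - η`, then `|z - w| ≤ 2 r Im w / η`, so the hypothesis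
`r Im w ≤ ν |z₁ - z₂|` with `ν = η / 8` puts `z₃` and `z₄` within a quarter of `|z₁ - z₂|` of `z₁`
and `z₂`. Hence `|z₁ - z₂| ≤ 2 |z₃ - z₄|`, and `|z₃ - conj z₄| ≤ |z₃ - z₄| + 2 Im z₄` with
`Im z₄ ≤ Im z₂ + |z₁ - z₂| / 4` and `Im z₂ ≤ |z₁ - conj z₂|`. Together these give
`|z₃ - conj z₄| / |z₃ - z₄| ≤ 6 |z₁ - conj z₂| / |z₁ - z₂|`, and `log 6 ≤ 2π` turns this into
`G(z₃, z₄) ≤ 1 + G(z₁, z₂)`.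
-/

open Complex ComplexConjugate

noncomputable def greenUHP (u v : ℂ) : ℝ :=
  (1 / (2 * Real.pi)) * Real.log (‖u - conj v‖ / ‖u - v‖)

lemma norm_sub_conj_self_of_im_nonneg {z : ℂ} (hz : 0 ≤ z.im) : ‖z - conj z‖ = 2 * z.im := by
  rw [sub_conj, norm_mul, norm_I, mul_one, norm_real, Real.norm_of_nonneg (by positivity)]

lemma norm_sub_le_norm_sub_conj {u v : ℂ} (hu : 0 ≤ u.im) (hv : 0 ≤ v.im) :
    ‖u - v‖ ≤ ‖u - conj v‖ := by
  rw [norm_def, norm_def]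
  apply Real.sqrt_le_sqrt
  simp only [normSq_apply, sub_re, sub_im, conj_re, conj_im, sub_neg_eq_add]
  nlinarith [mul_nonneg hu hv]

lemma im_le_norm_sub_conj {u v : ℂ} (hu : 0 ≤ u.im) : v.im ≤ ‖u - conj v‖ := by
  have h := im_le_norm (u - conj v)
  rw [sub_im, conj_im] at h
  linarith

lemma norm_sub_conj_le {u v : ℂ} (hv : 0 ≤ v.im) : ‖u - conj v‖ ≤ ‖u - v‖ + 2 * v.im := by
  rw [← norm_sub_conj_self_of_im_nonneg hv]
  exact norm_sub_le_norm_sub_add_norm_sub _ _ _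

lemma one_sub_mul_norm_sub_le {z w : ℂ} {r : ℝ} (hw : 0 ≤ w.im) (hr : 0 ≤ r)
    (hU : ‖z - w‖ ≤ r * ‖z - conj w‖) : (1 - r) * ‖z - w‖ ≤ 2 * (r * w.im) := by
  nlinarith [mul_le_mul_of_nonneg_left (norm_sub_conj_le (u := z) hw) hr]

lemma norm_sub_le_quarter {z w : ℂ} {η r A : ℝ} (hη : 0 < η) (hw : 0 ≤ w.im)
    (hr : r ∈ Set.Ioo 0 (1 - η)) (hν : r * w.im ≤ η / 8 * A)
    (hU : ‖z - w‖ ≤ r * ‖z - conj w‖) : ‖z - w‖ ≤ A / 4 := by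
  have h := one_sub_mul_norm_sub_le hw hr.1.le hU
  have hη_le : η * ‖z - w‖ ≤ (1 - r) * ‖z - w‖ :=
    mul_le_mul_of_nonneg_right (by linarith [hr.2]) (norm_nonneg _)
  nlinarith

lemma norm_sub_conj_mul_norm_sub_le {z₁ z₂ z₃ z₄ : ℂ} (h₁ : 0 ≤ z₁.im) (h₂ : 0 ≤ z₂.im)
    (h₄ : 0 ≤ z₄.im) (h₃₁ : ‖z₃ - z₁‖ ≤ ‖z₁ - z₂‖ / 4) (h₄₂ : ‖z₄ - z₂‖ ≤ ‖z₁ - z₂‖ / 4) :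
    ‖z₃ - conj z₄‖ * ‖z₁ - z₂‖ ≤ 6 * (‖z₁ - conj z₂‖ * ‖z₃ - z₄‖) := by
  set A := ‖z₁ - z₂‖
  set B := ‖z₁ - conj z₂‖
  set D := ‖z₃ - z₄‖
  have hA_le_D : A ≤ 2 * D := by
    have h := norm_sub_le_norm_sub_add_norm_sub z₁ z₃ z₄
    have h' := norm_sub_le_norm_sub_add_norm_sub z₁ z₄ z₂
    rw [norm_sub_rev z₁ z₃] at h
    linarith
  have hIm₄ : z₄.im ≤ z₂.im + A / 4 := by
    have h := im_le_norm (z₄ - z₂)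
    rw [sub_im] at h
    linarith
  have hA_le_B : A ≤ B := norm_sub_le_norm_sub_conj h₁ h₂
  have hIm₂ : z₂.im ≤ B := im_le_norm_sub_conj h₁
  calc ‖z₃ - conj z₄‖ * A ≤ (D + 2 * z₂.im + A / 2) * A := by
        gcongr
        linarith [norm_sub_conj_le (u := z₃) h₄]
    _ ≤ 6 * (B * D) := by
        have hA : 0 ≤ A := norm_nonneg _
        have hB : 0 ≤ B := norm_nonneg _
        nlinarith [mul_le_mul_of_nonneg_left hA_le_B (norm_nonneg (z₃ - z₄)),
          mul_le_mul hA_le_B hA_le_D hA hB, mul_le_mul hIm₂ hA_le_D hA hB]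

lemma log_six_le_two_pi : Real.log 6 ≤ 2 * Real.pi := by
  have h6 : Real.log 6 ≤ 2 := by
    rw [Real.log_le_iff_le_exp (by norm_num), show (2 : ℝ) = 1 + 1 by norm_num, Real.exp_add]
    nlinarith [Real.exp_one_gt_d9]
  linarith [Real.pi_gt_three]

lemma greenUHP_le_one_add {u v u' v' : ℂ} (hu : 0 ≤ u.im) (hv : 0 < v.im) (huv : u ≠ v)
    (hu'v' : u' ≠ v') (h : ‖u - conj v‖ * ‖u' - v'‖ ≤ 6 * (‖u' - conj v'‖ * ‖u - v‖)) :
    greenUHP u v ≤ 1 + greenUHP u' v' := by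
  have hd : 0 < ‖u - v‖ := norm_pos_iff.2 (sub_ne_zero.2 huv)
  have hd' : 0 < ‖u' - v'‖ := norm_pos_iff.2 (sub_ne_zero.2 hu'v')
  have hn : 0 < ‖u - conj v‖ := hv.trans_le (im_le_norm_sub_conj hu)
  have hratio : ‖u - conj v‖ / ‖u - v‖ ≤ 6 * (‖u' - conj v'‖ / ‖u' - v'‖) := by
    rw [div_le_iff₀ hd, mul_div_assoc', div_mul_eq_mul_div, le_div_iff₀ hd']
    linarith
  have hn' : 0 < ‖u' - conj v'‖ / ‖u' - v'‖ := by
    linarith [(div_pos hn hd).trans_le hratio]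
  have hlog : Real.log (‖u - conj v‖ / ‖u - v‖) ≤ 2 * Real.pi
      + Real.log (‖u' - conj v'‖ / ‖u' - v'‖) := by
    calc _ ≤ Real.log (6 * (‖u' - conj v'‖ / ‖u' - v'‖)) :=
          Real.log_le_log (div_pos hn hd) hratio
      _ = Real.log 6 + Real.log (‖u' - conj v'‖ / ‖u' - v'‖) :=
          Real.log_mul (by norm_num) hn'.ne'
      _ ≤ _ := by linarith [log_six_le_two_pi]
  unfold greenUHP
  calc _ ≤ (1 / (2 * Real.pi)) * (2 * Real.pi + Real.log (‖u' - conj v'‖ / ‖u' - v'‖)) :=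
        mul_le_mul_of_nonneg_left hlog (by positivity)
    _ = _ := by field_simp

/-- Two-point Green's function comparison: for `η ∈ (0,1)` there exist `ν, C₀ > 0` such that
for all distinct `z₁, z₂ ∈ ℍ`, radii `r₁, r₂ ∈ (0, 1−η)` with `rⱼ·Im zⱼ ≤ ν|z₁ − z₂|`, and all
distinct `z₃ ∈ U(z₁,r₁)`, `z₄ ∈ U(z₂,r₂)`, one has `G(z₃,z₄) ≤ C₀(1 + G(z₁,z₂))`, where
`G(u,v) = (1/2π) log(|u − conj v|/|u − v|)`. -/
theorem stmt_7 (η : ℝ) (hη : η ∈ Set.Ioo (0 : ℝ) 1) :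
    ∃ ν > (0 : ℝ), ∃ C₀ > (0 : ℝ), ∀ z₁ z₂ : ℂ, 0 < z₁.im → 0 < z₂.im → z₁ ≠ z₂ →
      ∀ r₁ r₂ : ℝ, r₁ ∈ Set.Ioo 0 (1 - η) → r₂ ∈ Set.Ioo 0 (1 - η) →
        r₁ * z₁.im ≤ ν * ‖z₁ - z₂‖ →
        r₂ * z₂.im ≤ ν * ‖z₁ - z₂‖ →
        ∀ z₃ z₄ : ℂ, 0 < z₃.im →
          ‖z₃ - z₁‖ ≤ r₁ * ‖z₃ - (starRingEnd ℂ) z₁‖ →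
          0 < z₄.im →
          ‖z₄ - z₂‖ ≤ r₂ * ‖z₄ - (starRingEnd ℂ) z₂‖ →
          z₃ ≠ z₄ →
          (1 / (2 * Real.pi)) *
              Real.log (‖z₃ - (starRingEnd ℂ) z₄‖ / ‖z₃ - z₄‖)
            ≤ C₀ * (1 + (1 / (2 * Real.pi)) *
              Real.log (‖z₁ - (starRingEnd ℂ) z₂‖ / ‖z₁ - z₂‖)) := by
  refine ⟨η / 8, by linarith [hη.1], 1, one_pos, ?_⟩
  intro z₁ z₂ h₁ h₂ h₁₂ r₁ r₂ hr₁ hr₂ hν₁ hν₂ z₃ z₄ h₃ hU₃ h₄ hU₄ h₃₄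
  have hz₃ := norm_sub_le_quarter hη.1 h₁.le hr₁ hν₁ hU₃
  have hz₄ := norm_sub_le_quarter hη.1 h₂.le hr₂ hν₂ hU₄
  rw [one_mul]
  exact greenUHP_le_one_add h₃.le h₄ h₃₄ h₁₂
    (norm_sub_conj_mul_norm_sub_le h₁.le h₂.le h₄.le hz₃ hz₄)
end

section
/- Let φ be a complex-valued function holomorphic on a neighborhood of a point c ∈ ℂ with φ′(c) ≠ 0. Then there exist ε₀ > 0 and C > 0 such that for every ε ∈ (0, ε₀]: the open disk of radius |φ′(c)|·ε − C·ε² centered at φ(c) is contained in the image φ(D(c,ε)) of the open disk D(c,ε) of radius ε centered at c, and φ(D(c,ε)) is contained in the open disk of radius |φ′(c)|·ε + C·ε² centered at φ(c). -/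
/-!
Near `c` the map `φ` is `C²`, so `φ'` is Lipschitz there and, by the mean value inequality,
`φ` differs from its linearization `z ↦ φ c + φ'(c) (z - c)` on `D(c, ε)` by a map with
Lipschitz constant `K ε`. A map that is `K ε`-close to multiplication by `a = φ'(c)` in this sense
sends `D(c, ε)` into the disk of radius `(‖a‖ + K ε) ε` and, by the contraction argument of the
inverse function theorem, onto a disk of radius `(‖a‖ - K ε) ε`.
-/

open Topology Metric Set NNReal ContinuousLinearMap

section ApproximatesLinearOn

variable {𝕜 : Type*} [NontriviallyNormedField 𝕜] {E F : Type*} [NormedAddCommGroup E]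
  [NormedSpace 𝕜 E] [NormedAddCommGroup F] [NormedSpace 𝕜 F] {f : E → F} {f' : E →L[𝕜] F}
  {s : Set E} {c : ℝ≥0} {ε : ℝ} {b : E}

theorem ApproximatesLinearOn.mapsTo_closedBall (hf : ApproximatesLinearOn f f' s c)
    (hε : closedBall b ε ⊆ s) :
    MapsTo f (closedBall b ε) (closedBall (f b) ((‖f'‖ + c) * ε)) := by
  intro z hz
  have hzb : ‖z - b‖ ≤ ε := mem_closedBall_iff_norm.1 hz
  have hb : b ∈ s := hε (mem_closedBall_self (norm_nonneg _ |>.trans hzb))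
  rw [mem_closedBall_iff_norm]
  calc ‖f z - f b‖ ≤ ‖f' (z - b)‖ + ‖f z - f b - f' (z - b)‖ := norm_le_insert' _ _
    _ ≤ ‖f'‖ * ‖z - b‖ + c * ‖z - b‖ := add_le_add (f'.le_opNorm _) (hf _ (hε hz) _ hb)
    _ = (‖f'‖ + c) * ‖z - b‖ := by ring
    _ ≤ (‖f'‖ + c) * ε := by gcongr

theorem ApproximatesLinearOn.surjOn_ball_of_nonlinearRightInverse [CompleteSpace E]
    (hf : ApproximatesLinearOn f f' s c) (f'symm : f'.NonlinearRightInverse) (ε0 : 0 ≤ ε)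
    (hε : ball b ε ⊆ s) :
    SurjOn f (ball b ε) (ball (f b) (((f'symm.nnnorm : ℝ)⁻¹ - c) * ε)) := by
  intro y hy
  set m : ℝ := (f'symm.nnnorm : ℝ)⁻¹ - c
  have hm : 0 < m := pos_of_mul_pos_left ((dist_nonneg (x := y)).trans_lt (mem_ball.1 hy)) ε0
  -- `y` already lies in the image of the closed ball of the smaller radius `ρ`.
  set ρ : ℝ := dist y (f b) / m
  have hρε : ρ < ε := (div_lt_iff₀' hm).2 (mem_ball.1 hy)
  have hρs : closedBall b ρ ⊆ s := (closedBall_subset_ball hρε).trans hε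
  have hy' : y ∈ closedBall (f b) (m * ρ) := by
    rw [mul_div_cancel₀ _ hm.ne']
    exact mem_closedBall.2 le_rfl
  obtain ⟨x, hx, rfl⟩ :=
    hf.surjOn_closedBall_of_nonlinearRightInverse f'symm (by positivity) hρs hy'
  exact ⟨x, closedBall_subset_ball hρε hx, rfl⟩

end ApproximatesLinearOn

namespace ContinuousLinearMap

variable {𝕜 : Type*} [NontriviallyNormedField 𝕜]

noncomputable def toSpanSingletonNonlinearRightInverse {a : 𝕜}
    (ha : a ≠ 0) : (toSpanSingleton 𝕜 a).NonlinearRightInverse where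
  toFun y := a⁻¹ * y
  nnnorm := ‖a‖₊⁻¹
  bound' y := by simp [norm_mul]
  right_inv' y := by
    rw [toSpanSingleton_apply, smul_eq_mul, mul_right_comm, inv_mul_cancel₀ ha, one_mul]

@[simp]
theorem nnnorm_toSpanSingletonNonlinearRightInverse {a : 𝕜}
    (ha : a ≠ 0) : (toSpanSingletonNonlinearRightInverse ha).nnnorm = ‖a‖₊⁻¹ :=
  rfl

end ContinuousLinearMap

theorem ContDiffAt.exists_approximatesLinearOn_closedBall {𝕂 : Type*} [RCLike 𝕂]
    {E F : Type*} [NormedAddCommGroup E] [NormedSpace 𝕂 E] [NormedAddCommGroup F]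
    [NormedSpace 𝕂 F] {f : E → F} {x : E} (hf : ContDiffAt 𝕂 2 f x) :
    ∃ δ > 0, ∃ K : ℝ≥0, ∀ ε : ℝ≥0, (ε : ℝ) ≤ δ →
      ApproximatesLinearOn f (fderiv 𝕂 f x) (closedBall x ε) (K * ε) := by
  let _ : NormedSpace ℝ E := .restrictScalars ℝ 𝕂 E
  obtain ⟨K, t, ht, hK⟩ := (hf.fderiv_right (m := 1) (by norm_num)).exists_lipschitzOnWith
  have hdiff : ∀ᶠ y in 𝓝 x, DifferentiableAt 𝕂 f y :=
    (hf.eventually (by simp)).mono fun y hy => hy.differentiableAt (by norm_num)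
  obtain ⟨δ, hδ, hδs⟩ := nhds_basis_closedBall.mem_iff.1 (Filter.inter_mem ht hdiff)
  refine ⟨δ, hδ, K, fun ε hε z hz w hw => ?_⟩
  have hsub : closedBall x ε ⊆ closedBall x δ := closedBall_subset_closedBall hε
  refine (convex_closedBall x ε).norm_image_sub_le_of_norm_hasFDerivWithin_le'
    (fun y hy => (hδs (hsub hy)).2.hasFDerivAt.hasFDerivWithinAt) (fun y hy => ?_) hw hz
  calc ‖fderiv 𝕂 f y - fderiv 𝕂 f x‖ ≤ K * ‖y - x‖ :=
        hK.norm_sub_le (hδs (hsub hy)).1 (hδs (hsub (mem_closedBall_self ε.2))).1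
    _ ≤ K * ε := by gcongr; exact mem_closedBall_iff_norm.1 hy
    _ = ((K * ε : ℝ≥0) : ℝ) := by push_cast; ring

/-- Disk-distortion estimate: if `φ` is holomorphic on a neighborhood of `c` with
`φ′(c) ≠ 0`, then there are `ε₀, C > 0` such that for all `ε ∈ (0, ε₀]`,
`D(φ(c), |φ′(c)|ε − Cε²) ⊆ φ(D(c,ε)) ⊆ D(φ(c), |φ′(c)|ε + Cε²)`. -/
theorem stmt_13 (φ : ℂ → ℂ) (c : ℂ) (U : Set ℂ) (hU : U ∈ 𝓝 c)
    (hφ : DifferentiableOn ℂ φ U) (hd : deriv φ c ≠ 0) :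
    ∃ ε₀ > (0 : ℝ), ∃ C > (0 : ℝ), ∀ ε : ℝ, 0 < ε → ε ≤ ε₀ →
      Metric.ball (φ c) (‖deriv φ c‖ * ε - C * ε ^ 2) ⊆ φ '' Metric.ball c ε ∧
      φ '' Metric.ball c ε ⊆ Metric.ball (φ c) (‖deriv φ c‖ * ε + C * ε ^ 2) := by
  obtain ⟨δ, hδ, K, hK⟩ :=
    ((hφ.analyticAt hU).contDiffAt : ContDiffAt ℂ 2 φ c).exists_approximatesLinearOn_closedBall
  refine ⟨δ, hδ, K + 1, by positivity, fun ε hε hεδ => ?_⟩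
  lift ε to ℝ≥0 using hε.le
  have happrox := hK ε hεδ
  rw [← toSpanSingleton_deriv] at happrox
  constructor
  · calc ball (φ c) (‖deriv φ c‖ * ε - (K + 1) * ε ^ 2)
        ⊆ ball (φ c) ((((toSpanSingletonNonlinearRightInverse hd).nnnorm : ℝ)⁻¹
            - (K * ε : ℝ≥0)) * ε) := ball_subset_ball (by simp; nlinarith)
      _ ⊆ φ '' ball c ε := happrox.surjOn_ball_of_nonlinearRightInverse _ hε.le
          ball_subset_closedBall
  · calc φ '' ball c ε ⊆ φ '' closedBall c ε := image_mono ball_subset_closedBall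
      _ ⊆ closedBall (φ c) ((‖toSpanSingleton ℂ (deriv φ c)‖ + (K * ε : ℝ≥0)) * ε) :=
          (happrox.mapsTo_closedBall subset_rfl).image_subset
      _ ⊆ ball (φ c) (‖deriv φ c‖ * ε + (K + 1) * ε ^ 2) :=
          closedBall_subset_ball (by simp; nlinarith)
end

section
/- Let x, y be real numbers with 0 < x ≤ y < 1, x ≤ 1/4 and 1 − y ≤ 1/4 (so that y − x ≥ 1/2), and define f(t) = (1 − x)·t / ( (1 − 2x)·t + x ) for t ∈ [0,1]. Then: (i) the denominator (1 − 2x)t + x is strictly positive for all t ∈ [0,1], f(0) = 0, f(1) = 1, f(x) = 1/2, and f is strictly increasing on [0,1]; (ii) 1 − f(y) = x(1 − y) / ( y − x + 2x(1 − y) ) ≤ 2·x·(1 − y); and (iii) for all a ∈ [0, x] and b ∈ [y, 1], f(b) − f(a) ≥ 3/8, and in particular f(b) − f(a) ≥ (3/8)(b − a). -/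
/-!
The map `t ↦ (1 - x) t / ((1 - 2x) t + x)` has denominator `(1 - x) t + x (1 - t)`, a convex
combination of the positive numbers `x` and `1 - x`, and the two identities
`f t - f s = x (1 - x) (t - s) / (D t D s)` and `1 - f t = x (1 - t) / D t` give everything:
monotonicity, the formula for `1 - f y`, and, since `D y ≥ y - x ≥ 1/2`, the bound
`1 - f y ≤ 2x(1 - y) ≤ 1/8`. Then `f a ≤ f x = 1/2` and `f b ≥ f y ≥ 7/8` on the two end intervals.
-/

noncomputable section

namespace MobiusHalf

def den (x t : ℝ) : ℝ := (1 - 2 * x) * t + x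

def map (x t : ℝ) : ℝ := (1 - x) * t / den x t

variable {x : ℝ}

theorem den_pos (hx0 : 0 < x) (hx1 : x < 1) {t : ℝ} (ht : t ∈ Set.Icc (0 : ℝ) 1) :
    0 < den x t := by
  obtain ⟨ht0, ht1⟩ := ht
  have hconvex : den x t = (1 - x) * t + x * (1 - t) := by unfold den; ring
  rw [hconvex]
  have hx1' : 0 < 1 - x := by linarith
  rcases le_or_gt t (1 / 2) with ht | ht
  · nlinarith [mul_nonneg hx1'.le ht0]
  · nlinarith [mul_nonneg hx0.le (sub_nonneg.2 ht1)]

theorem map_zero : map x 0 = 0 := by simp [map]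

theorem map_one (hx1 : x < 1) : map x 1 = 1 := by
  rw [map, den, div_eq_one_iff_eq (by linarith)]
  ring

theorem map_self (hx0 : 0 < x) (hx1 : x < 1) : map x x = 1 / 2 := by
  have hden : den x x = 2 * (x * (1 - x)) := by unfold den; ring
  have hpos : 0 < x * (1 - x) := mul_pos hx0 (by linarith)
  rw [map, hden, div_eq_iff (by positivity)]
  ring

theorem map_sub_map {s t : ℝ} (hs : den x s ≠ 0) (ht : den x t ≠ 0) :
    map x t - map x s = x * (1 - x) * (t - s) / (den x t * den x s) := by
  rw [map, map, div_sub_div _ _ ht hs]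
  congr 1
  unfold den
  ring

theorem strictMonoOn_map (hx0 : 0 < x) (hx1 : x < 1) : StrictMonoOn (map x) (Set.Icc 0 1) := by
  intro s hs t ht hst
  have hds := den_pos hx0 hx1 hs
  have hdt := den_pos hx0 hx1 ht
  rw [← sub_pos, map_sub_map hds.ne' hdt.ne']
  have : 0 < x * (1 - x) := mul_pos hx0 (by linarith)
  positivity [sub_pos.2 hst]

theorem one_sub_map {t : ℝ} (ht : den x t ≠ 0) : 1 - map x t = x * (1 - t) / den x t := by
  rw [map, one_sub_div ht]
  congr 1
  unfold den
  ring

theorem one_sub_map_le (hx0 : 0 < x) {t : ℝ} (ht : t ≤ 1) (hden : 1 / 2 ≤ den x t) :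
    1 - map x t ≤ 2 * x * (1 - t) := by
  rw [one_sub_map (by linarith), div_le_iff₀ (by linarith)]
  nlinarith [mul_nonneg hx0.le (sub_nonneg.2 ht)]

end MobiusHalf

end

open MobiusHalf in
/-- Explicit estimates for the Möbius map `f(t) = (1 − x)t/((1 − 2x)t + x)` fixing `0, 1`
and sending `x` to `1/2`, when `0 < x ≤ y < 1`, `x ≤ 1/4` and `1 − y ≤ 1/4`:
(i) positivity of the denominator on `[0,1]`, the special values, strict monotonicity;
(ii) `1 − f(y) = x(1 − y)/(y − x + 2x(1 − y)) ≤ 2x(1 − y)`;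
(iii) `f(b) − f(a) ≥ 3/8 ≥ (3/8)(b − a)` for `a ∈ [0,x]`, `b ∈ [y,1]`. -/
theorem stmt_14 (x y : ℝ) (hx : 0 < x) (hxy : x ≤ y) (hy : y < 1)
    (hx4 : x ≤ 1 / 4) (hy4 : 1 - y ≤ 1 / 4)
    (f : ℝ → ℝ) (hf : ∀ t, f t = (1 - x) * t / ((1 - 2 * x) * t + x)) :
    ((∀ t ∈ Set.Icc (0 : ℝ) 1, 0 < (1 - 2 * x) * t + x) ∧
      f 0 = 0 ∧ f 1 = 1 ∧ f x = 1 / 2 ∧ StrictMonoOn f (Set.Icc 0 1)) ∧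
    (1 - f y = x * (1 - y) / (y - x + 2 * x * (1 - y)) ∧ 1 - f y ≤ 2 * x * (1 - y)) ∧
    (∀ a ∈ Set.Icc 0 x, ∀ b ∈ Set.Icc y 1,
      3 / 8 ≤ f b - f a ∧ 3 / 8 * (b - a) ≤ f b - f a) := by
  obtain rfl : f = map x := funext hf
  have hx1 : x < 1 := by linarith
  have hdy : den x y = y - x + 2 * x * (1 - y) := by unfold den; ring
  have hfy : 1 - map x y ≤ 2 * x * (1 - y) :=
    one_sub_map_le hx hy.le (by rw [hdy]; nlinarith)
  have hmono := strictMonoOn_map hx hx1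
  refine ⟨⟨fun t ht ↦ den_pos hx hx1 ht, map_zero, map_one hx1, map_self hx hx1, hmono⟩,
    ⟨hdy ▸ one_sub_map (den_pos hx hx1 ⟨by linarith, hy.le⟩).ne', hfy⟩, ?_⟩
  rintro a ⟨ha0, hax⟩ b ⟨hyb, hb1⟩
  have hfa : map x a ≤ 1 / 2 :=
    map_self hx hx1 ▸ hmono.monotoneOn ⟨ha0, by linarith⟩ ⟨hx.le, hx1.le⟩ hax
  have hfb : map x y ≤ map x b :=
    hmono.monotoneOn ⟨by linarith, hy.le⟩ ⟨by linarith, hb1⟩ hyb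
  have hfy' : 7 / 8 ≤ map x y := by nlinarith
  exact ⟨by linarith, by nlinarith⟩
end
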